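/- Let φ be a proper coloring of a graph containing disjoint vertex sets A and B and a vertex d adjacent to every vertex of B, where φ uses at least k colors on A and at least k colors on B. Then either φ uses at least k+1 colors on A ∪ B, or φ uses at least k+1 colors on A ∪ {d}. -/
import Mathlib


/-- Key counting step: if a proper coloring `C` of `G` uses at least `k` colors on each
of the disjoint sets `A` and `B`, and `d` is a vertex adjacent to every vertex of `B`,
then `C` uses at least `k + 1` colors on `A ∪ B` or at least `k + 1` colors on
`A ∪ {d}`. -/
theorem burling_counting_step
    {V α : Type} [Fintype V] (G : SimpleGraph V) (C : G.Coloring α)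
    (A B : Set V) (d : V) (k : ℕ)
    (hdisj : Disjoint A B)
    (hd : ∀ b ∈ B, G.Adj d b)
    (hA : k ≤ (C '' A).ncard) (hB : k ≤ (C '' B).ncard) :
    k + 1 ≤ (C '' (A ∪ B)).ncard ∨ k + 1 ≤ (C '' (A ∪ {d})).ncard := by
  have hfinA : (C '' A).Finite := (Set.toFinite A).image _
  have hfinB : (C '' B).Finite := (Set.toFinite B).image _
  by_cases hmem : C d ∈ C '' A
  · -- C d ∉ C '' B, and insert (C d) (C '' B) ⊆ C '' (A ∪ B)
    left
    have hnB : C d ∉ C '' B := by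
      rintro ⟨b, hb, hcb⟩
      exact C.valid (hd b hb) hcb.symm
    have hsub : insert (C d) (C '' B) ⊆ C '' (A ∪ B) := by
      rintro x (rfl | hx)
      · obtain ⟨a, ha, hca⟩ := hmem
        exact ⟨a, Or.inl ha, hca⟩
      · obtain ⟨b, hb, hcb⟩ := hx
        exact ⟨b, Or.inr hb, hcb⟩
    calc k + 1 ≤ (C '' B).ncard + 1 := by omega
      _ = (insert (C d) (C '' B)).ncard := (Set.ncard_insert_of_notMem hnB hfinB).symm
      _ ≤ (C '' (A ∪ B)).ncard :=
        Set.ncard_le_ncard hsub ((Set.toFinite (A ∪ B)).image _)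
  · right
    have : C '' (A ∪ {d}) = insert (C d) (C '' A) := by
      rw [Set.image_union, Set.image_singleton, Set.union_singleton]
    rw [this, Set.ncard_insert_of_notMem hmem hfinA]
    omega
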